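/- Let G be a finite simple graph. Then for every integer i ≥ 0, B_i(G) ≥ Σ_{v ∈ V} C(deg v, i+1) − k_{i+2}(G) + Σ_{a=2}^{⌊(i+2)/2⌋} k_{a, i+2−a}(G), where for 2 ≤ a ≤ ⌊(i+2)/2⌋, k_{a,i+2−a}(G) denotes the number of (i+2)-element vertex subsets S such that the induced subgraph G[S] is isomorphic to the complete bipartite graph K_{a, i+2−a}. -/

import Mathlib

/-!
Call `v ∈ S` universal in `S` if it is adjacent to every other vertex of `S`. Universal vertices
are isolated in the complement of `G[S]`, so each forms a component of its own, and when `S` is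
not a clique a non-universal vertex lies in yet another component. Choosing `v` and `i + 1` of its
neighbours counts the pairs (`S`, universal vertex of `S`) with `|S| = i + 2`, which gives
`∑ C(deg v, i + 1)`. If `G[S] ≅ K_{a,b}` with `a, b ≥ 2`, then `S` has no universal vertex but
the complement `K_a ⊔ K_b` still has two components; and `S` determines the smaller part size
`a` as the degree of the vertices in the larger part, so no `S` is counted for two values of `a`.
-/
open Finset

/-- The `i`-th Betti number in the linear strand of the edge ideal of `G`:
`B_i(G) = Σ_{S ⊆ V, |S| = i+2} (#components of the complement of G[S] − 1)`. -/
noncomputable def linStrand {V : Type*} [Fintype V] [DecidableEq V]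
    (G : SimpleGraph V) (i : ℕ) : ℕ :=
  ∑ S ∈ (Finset.univ : Finset V).powersetCard (i + 2),
    (Nat.card ((G.induce (S : Set V))ᶜ.ConnectedComponent) - 1)

/-- The number of `m`-element vertex subsets `S` of `G` whose induced subgraph
is isomorphic to the graph `H`. -/
noncomputable def numIndIso {V W : Type*} [Fintype V] [DecidableEq V]
    (G : SimpleGraph V) (m : ℕ) (H : SimpleGraph W) : ℕ :=
  {S : Finset V | S.card = m ∧ Nonempty (G.induce (S : Set V) ≃g H)}.ncard

namespace SimpleGraph

section Isolated

variable {α : Type*} {H : SimpleGraph α}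

theorem IsIsolated.eq_of_reachable {v w : α} (hv : H.IsIsolated v) (h : H.Reachable v w) :
    v = w := by
  obtain ⟨_ | ⟨hadj, _⟩⟩ := h
  · rfl
  · exact absurd hadj (hv _)

theorem injOn_connectedComponentMk_insert {s : Set α} (hs : ∀ v ∈ s, H.IsIsolated v) (x : α) :
    Set.InjOn H.connectedComponentMk (insert x s) := by
  rintro a (rfl | ha) b (rfl | hb) hab <;> replace hab := ConnectedComponent.exact hab
  · rfl
  · exact ((hs b hb).eq_of_reachable hab.symm).symm
  · exact (hs a ha).eq_of_reachable hab
  · exact (hs a ha).eq_of_reachable hab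

variable [Finite α]

theorem ncard_le_card_connectedComponent {s : Set α} (hs : ∀ v ∈ s, H.IsIsolated v) :
    s.ncard ≤ Nat.card H.ConnectedComponent := by
  rw [← Set.ncard_univ]
  exact Set.ncard_le_ncard_of_injOn _ (fun _ _ ↦ Set.mem_univ _)
    (fun a ha _ _ hab ↦ (hs a ha).eq_of_reachable (ConnectedComponent.exact hab))

theorem ncard_lt_card_connectedComponent {s : Set α} (hs : ∀ v ∈ s, H.IsIsolated v) {x : α}
    (hx : x ∉ s) : s.ncard < Nat.card H.ConnectedComponent := by
  rw [← Set.ncard_univ, Nat.lt_iff_add_one_le, ← Set.ncard_insert_of_notMem hx]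
  exact Set.ncard_le_ncard_of_injOn _ (fun _ _ ↦ Set.mem_univ _)
    (injOn_connectedComponentMk_insert hs x)

end Isolated

def Iso.compl {α β : Type*} {G : SimpleGraph α} {H : SimpleGraph β} (e : G ≃g H) :
    Gᶜ ≃g Hᶜ :=
  ⟨e.toEquiv, by simp [compl_adj, e.map_adj_iff]⟩

namespace completeBipartiteGraph

variable {α β : Type*}

theorem neighborSet_inl (x : α) :
    (completeBipartiteGraph α β).neighborSet (.inl x) = Set.range .inr := by
  ext (w | w) <;> simp

theorem neighborSet_inr (y : β) :
    (completeBipartiteGraph α β).neighborSet (.inr y) = Set.range .inl := by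
  ext (w | w) <;> simp

theorem isLeft_eq_of_reachable_compl {u v : α ⊕ β}
    (h : (completeBipartiteGraph α β)ᶜ.Reachable u v) : u.isLeft = v.isLeft := by
  obtain ⟨p⟩ := h
  induction p with
  | nil => rfl
  | @cons x y _ hadj _ ih =>
    rw [← ih]
    cases x <;> cases y <;> simp_all

instance [Nonempty α] [Nonempty β] :
    Nontrivial (completeBipartiteGraph α β)ᶜ.ConnectedComponent :=
  ⟨⟨_, _, fun h ↦ by
    simpa using isLeft_eq_of_reachable_compl (SimpleGraph.ConnectedComponent.exact h)
      (u := .inl (Classical.arbitrary α)) (v := .inr (Classical.arbitrary β))⟩⟩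

theorem not_isIsolated_compl [Nontrivial α] [Nontrivial β] (v : α ⊕ β) :
    ¬(completeBipartiteGraph α β)ᶜ.IsIsolated v := by
  rcases v with x | y
  · obtain ⟨x', hx'⟩ := exists_ne x
    exact fun h ↦ h (.inl x') ⟨by simpa using hx'.symm, by simp⟩
  · obtain ⟨y', hy'⟩ := exists_ne y
    exact fun h ↦ h (.inr y') ⟨by simpa using hy'.symm, by simp⟩

theorem card_neighborSet_inl (x : α) :
    Nat.card ((completeBipartiteGraph α β).neighborSet (.inl x)) = Nat.card β := by
  rw [neighborSet_inl, Nat.card_range_of_injective Sum.inr_injective]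

theorem card_neighborSet_inr (y : β) :
    Nat.card ((completeBipartiteGraph α β).neighborSet (.inr y)) = Nat.card α := by
  rw [neighborSet_inr, Nat.card_range_of_injective Sum.inl_injective]

end completeBipartiteGraph

theorem one_lt_card_connectedComponent_compl_of_iso {W α β : Type*} [Finite W] [Nonempty α]
    [Nonempty β] {H : SimpleGraph W} (e : H ≃g completeBipartiteGraph α β) :
    1 < Nat.card Hᶜ.ConnectedComponent :=
  have := e.compl.connectedComponentEquiv.nontrivial
  Finite.one_lt_card

theorem eq_of_completeBipartiteGraph_iso {n a a' : ℕ} (ha : a ≤ n / 2) (ha' : a' ≤ n / 2)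
    (hb : a < n) (ψ : completeBipartiteGraph (Fin a) (Fin (n - a)) ≃g
      completeBipartiteGraph (Fin a') (Fin (n - a'))) : a = a' := by
  have hdeg := Nat.card_congr (ψ.mapNeighborSet (.inr ⟨0, by omega⟩))
  rw [completeBipartiteGraph.card_neighborSet_inr] at hdeg
  generalize ψ _ = w at hdeg
  rcases w with x | y
  · rw [completeBipartiteGraph.card_neighborSet_inl] at hdeg
    simp only [Nat.card_eq_fintype_card, Fintype.card_fin] at hdeg
    omega
  · rw [completeBipartiteGraph.card_neighborSet_inr] at hdeg
    simpa using hdeg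

section Universal

variable {V : Type*} [Fintype V] [DecidableEq V] (G : SimpleGraph V) [DecidableRel G.Adj]

def universalVertices (S : Finset V) : Finset V :=
  {v ∈ S | S.erase v ⊆ G.neighborFinset v}

variable {G}

theorem isIsolated_compl_induce_iff {S : Finset V} (u : (S : Set V)) :
    (G.induce S)ᶜ.IsIsolated u ↔ ↑u ∈ G.universalVertices S := by
  obtain ⟨u, hu⟩ := u
  simp only [mem_coe] at hu
  simp [IsIsolated, universalVertices, subset_iff, hu, eq_comm, imp.swap (a := _ ∈ S)]

theorem ncard_isIsolated_compl_induce (S : Finset V) :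
    {u : (S : Set V) | (G.induce S)ᶜ.IsIsolated u}.ncard = #(G.universalVertices S) := by
  have hU : {u : (S : Set V) | (G.induce S)ᶜ.IsIsolated u} =
      Subtype.val ⁻¹' (G.universalVertices S : Set V) := by
    ext u; exact isIsolated_compl_induce_iff u
  rw [hU, Set.ncard_preimage_of_injective_subset_range Subtype.val_injective, Set.ncard_coe_finset]
  rw [Subtype.range_coe]
  exact coe_subset.mpr (filter_subset _ _)

theorem card_universalVertices_le (S : Finset V) :
    #(G.universalVertices S) ≤ Nat.card (G.induce S)ᶜ.ConnectedComponent := by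
  rw [← ncard_isIsolated_compl_induce]
  exact ncard_le_card_connectedComponent fun _ ↦ id

theorem card_universalVertices_lt {S : Finset V} (hS : ¬G.IsClique (S : Set V)) :
    #(G.universalVertices S) < Nat.card (G.induce S)ᶜ.ConnectedComponent := by
  obtain ⟨v, hv, w, hw, hvw, hnadj⟩ : ∃ v ∈ S, ∃ w ∈ S, v ≠ w ∧ ¬G.Adj v w := by
    simpa [IsClique, Set.Pairwise] using hS
  rw [← ncard_isIsolated_compl_induce]
  refine ncard_lt_card_connectedComponent (fun _ ↦ id) (x := ⟨v, hv⟩) fun h ↦ ?_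
  exact h ⟨w, hw⟩ ⟨by simpa using hvw, by simpa using hnadj⟩

theorem universalVertices_eq_empty_of_iso {α β : Type*} [Nontrivial α] [Nontrivial β]
    {S : Finset V} (e : G.induce S ≃g completeBipartiteGraph α β) :
    G.universalVertices S = ∅ := by
  refine eq_empty_iff_forall_notMem.mpr fun v hv ↦ ?_
  have hvS : v ∈ (S : Set V) := mem_coe.mpr (mem_filter.mp hv).1
  have hiso := (isIsolated_compl_induce_iff ⟨v, hvS⟩).mpr hv
  refine completeBipartiteGraph.not_isIsolated_compl (e ⟨v, hvS⟩) fun w hw ↦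
    hiso (e.symm w) (e.compl.map_adj_iff.mp ?_)
  rwa [show e.compl (e.symm w) = w from e.apply_symm_apply w]

theorem card_filter_mem_universalVertices (v : V) (k : ℕ) :
    #{S ∈ (univ : Finset V).powersetCard (k + 1) | v ∈ G.universalVertices S} =
      (G.degree v).choose k := by
  rw [← card_neighborFinset_eq_degree, ← card_powersetCard]
  have hv (T : Finset V) (hT : T ⊆ G.neighborFinset v) : v ∉ T := fun h ↦ by simpa using hT h
  refine card_nbij' (·.erase v) (insert v) ?_ ?_ ?_ ?_ <;> intro S hS <;>
    simp_all [universalVertices]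

theorem sum_card_universalVertices (k : ℕ) :
    ∑ S ∈ (univ : Finset V).powersetCard (k + 1), #(G.universalVertices S) =
      ∑ v, (G.degree v).choose k := by
  have := sum_card_bipartiteAbove_eq_sum_card_bipartiteBelow
    (fun S v ↦ v ∈ G.universalVertices S) (s := (univ : Finset V).powersetCard (k + 1))
    (t := univ)
  simp only [bipartiteAbove, bipartiteBelow, filter_univ_mem] at this
  rw [this]
  exact sum_congr rfl fun v _ ↦ card_filter_mem_universalVertices v k

end Universal

end SimpleGraph

open SimpleGraph

open Classical in
theorem numIndIso_eq_card_filter {V W : Type*} [Fintype V] [DecidableEq V] (G : SimpleGraph V)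
    (m : ℕ) (H : SimpleGraph W) :
    numIndIso G m H =
      #((univ.powersetCard m).filter fun S : Finset V ↦
        Nonempty (G.induce (S : Set V) ≃g H)) := by
  rw [numIndIso, ← Set.ncard_coe_finset, coe_filter]
  simp only [mem_powersetCard_univ]

theorem card_cliqueFinset_eq_card_filter {V : Type*} [Fintype V] [DecidableEq V] (G : SimpleGraph V)
    [DecidableRel G.Adj] (n : ℕ) :
    #(G.cliqueFinset n) =
      #((univ.powersetCard n).filter fun S : Finset V ↦ G.IsClique (S : Set V)) := by
  congr 1
  ext S
  simp [isNClique_iff, and_comm]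

open Classical in
theorem card_filter_nonempty_iso_completeBipartiteGraph_le_one {W : Type*}
    (H : SimpleGraph W) (n : ℕ) :
    #{a ∈ Icc 2 (n / 2) |
      Nonempty (H ≃g completeBipartiteGraph (Fin a) (Fin (n - a)))} ≤ 1 := by
  refine card_le_one.mpr fun a ha a' ha' ↦ ?_
  simp only [mem_filter, mem_Icc] at ha ha'
  obtain ⟨⟨ha2, ha⟩, ⟨e⟩⟩ := ha
  obtain ⟨⟨-, ha'⟩, ⟨e'⟩⟩ := ha'
  exact eq_of_completeBipartiteGraph_iso ha ha' (by omega) (e.symm.trans e')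

open Classical in
theorem card_universalVertices_add_card_filter_iso_le {V : Type*} [Fintype V] [DecidableEq V]
    {G : SimpleGraph V} [DecidableRel G.Adj] (S : Finset V) (n : ℕ) :
    #(G.universalVertices S) + #{a ∈ Icc 2 (n / 2) |
        Nonempty (G.induce (S : Set V) ≃g completeBipartiteGraph (Fin a) (Fin (n - a)))} ≤
      Nat.card (G.induce (S : Set V))ᶜ.ConnectedComponent - 1 +
        if G.IsClique (S : Set V) then 1 else 0 := by
  rcases Nat.le_one_iff_eq_zero_or_eq_one.mp
    (card_filter_nonempty_iso_completeBipartiteGraph_le_one (G.induce (S : Set V)) n) with h0 | h1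
  · have hle := card_universalVertices_le (G := G) S
    rw [h0]
    split_ifs with hcl
    · omega
    · have := card_universalVertices_lt hcl
      omega
  · obtain ⟨a, ha⟩ := card_eq_one.mp h1
    obtain ⟨ha, ⟨e⟩⟩ := mem_filter.mp (ha ▸ mem_singleton_self a)
    have : Nontrivial (Fin a) := Fin.nontrivial_iff_two_le.mpr (mem_Icc.mp ha).1
    have : Nontrivial (Fin (n - a)) := Fin.nontrivial_iff_two_le.mpr (by grind)
    have := one_lt_card_connectedComponent_compl_of_iso e
    rw [h1, universalVertices_eq_empty_of_iso e, card_empty]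
    split_ifs <;> omega

/-- For every finite simple graph `G` and every `i ≥ 0`,
`B_i(G) ≥ Σ_{v ∈ V} C(deg v, i+1) − k_{i+2}(G) + Σ_{a=2}^{⌊(i+2)/2⌋} k_{a,i+2−a}(G)`. -/
theorem linStrand_lower_bound
    {V : Type*} [Fintype V] [DecidableEq V] (G : SimpleGraph V) [DecidableRel G.Adj]
    (i : ℕ) :
    (linStrand G i : ℤ) ≥
      ∑ v : V, ((G.degree v).choose (i + 1) : ℤ) - (G.cliqueFinset (i + 2)).card
        + ∑ a ∈ Finset.Icc 2 ((i + 2) / 2),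
            (numIndIso G (i + 2) (completeBipartiteGraph (Fin a) (Fin (i + 2 - a))) : ℤ) := by
  classical
  have hbip : ∑ a ∈ Icc 2 ((i + 2) / 2),
        numIndIso G (i + 2) (completeBipartiteGraph (Fin a) (Fin (i + 2 - a))) =
      ∑ S ∈ (univ : Finset V).powersetCard (i + 2), #{a ∈ Icc 2 ((i + 2) / 2) |
        Nonempty (G.induce (S : Set V) ≃g completeBipartiteGraph (Fin a) (Fin (i + 2 - a)))} := by
    simp only [numIndIso_eq_card_filter]
    exact sum_card_bipartiteAbove_eq_sum_card_bipartiteBelow _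
  have hlocal := sum_le_sum (s := (univ : Finset V).powersetCard (i + 2)) fun S _ ↦
    card_universalVertices_add_card_filter_iso_le (G := G) S (i + 2)
  rw [sum_add_distrib, sum_add_distrib, sum_card_universalVertices, ← hbip, ← linStrand,
    ← card_filter, ← card_cliqueFinset_eq_card_filter] at hlocal
  zify at hlocal
  linarith
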